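/- arXiv:1108.3810 — 2 statements merged into one kernel-verified Lean document; each statement's English description precedes it below -/
import Mathlib

section
/- Let ∂ : M → Q be a pre-crossed module, σ : P → Q a homomorphism, and β₁ : σ*(M) → P the pullback pre-crossed module with σ*(M) = {(p,m) : σ(p) = ∂(m)} and action (p,m)^{p'} = (p'⁻¹ p p', m^{σ(p')}). Then for all elements (p₁,m₁), (p₂,m₂) ∈ σ*(M), the Peiffer commutator satisfies ⟨(p₁,m₁),(p₂,m₂)⟩ = (1, ⟨m₁,m₂⟩), where ⟨m₁,m₂⟩ is the Peiffer commutator in the pre-crossed module ∂. -/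
/-- In the pullback pre-crossed module β₁ : σ*(M) → P, the Peiffer commutator of
(p₁,m₁) and (p₂,m₂) equals (1, ⟨m₁,m₂⟩), the Peiffer commutator being taken in P × M using
β₁ = pr₁ and the action (p,m)^{p'} = (p'⁻¹ p p', m^{σ p'}). -/
theorem pullback_peiffer_eq {M Q P : Type*} [Group M] [Group Q] [Group P]
    (d : M →* Q) (a : Q →* MulAut M)
    (hpre : ∀ (m : M) (q : Q), d (a q m) = q⁻¹ * d m * q)
    (σ : P →* Q) (p₁ p₂ : P) (m₁ m₂ : M)
    (h₁ : σ p₁ = d m₁) (h₂ : σ p₂ = d m₂) :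
    ((p₁, m₁) : P × M)⁻¹ * ((p₂, m₂) : P × M)⁻¹ * ((p₁, m₁) : P × M) *
        ((p₁⁻¹ * p₂ * p₁, a (σ p₁) m₂) : P × M)
      = ((1, m₁⁻¹ * m₂⁻¹ * m₁ * a (d m₁) m₂) : P × M) := by
  rw [Prod.ext_iff]
  constructor
  · simp only [Prod.fst_inv, Prod.fst_mul]
    group
  · simp [h₁, mul_assoc]
end

section
/- Let ∂ : M → P be a pre-crossed module and φ : P → Q a surjective homomorphism with kernel K. Let [K,M] ≤ M be the normal subgroup generated by {m⁻¹ m^k : k ∈ K, m ∈ M}. Then the map ∂* : M/[K,M] → Q given by ∂*(m[K,M]) = φ(∂ m) is a well-defined group homomorphism, and with the induced Q-action (m[K,M])^{φ(p)} = m^p[K,M] it is a pre-crossed module; moreover if ∂ is a nil(2)-module then so is ∂*. -/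
/-- Peiffer commutator of a pre-crossed module given by boundary `D` and action `A`. -/
def peiffer {G Q : Type*} [Group G] [Group Q] (D : G →* Q) (A : Q →* MulAut G)
    (x y : G) : G :=
  x⁻¹ * y⁻¹ * x * A (D x) y

/-!
The subgroup `[K, M]` is invariant under `P` because `K` is normal in `P`, so `P` acts on
`M ⧸ [K, M]`, and `K` acts trivially there by construction; hence the action factors through
`Q = P ⧸ K`. The boundary `φ ∘ d` kills `[K, M]` because `d (m⁻¹ m^k) = (d m)⁻¹ k⁻¹ (d m) k`
lies in `K`. The quotient map is equivariant and surjective, so it carries Peiffer commutators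
onto Peiffer commutators, and the Peiffer identities descend.
-/

section ActionCommutator

variable {M P : Type*} [Group M] [Group P] (a : P →* MulAut M)

/-- The subgroup `[K, M]` of the paper. -/
def actionCommutator (K : Subgroup P) : Subgroup M :=
  Subgroup.normalClosure {x | ∃ k ∈ K, ∃ m : M, x = m⁻¹ * a k m}

variable {a}

instance actionCommutator.normal (K : Subgroup P) : (actionCommutator a K).Normal :=
  Subgroup.normalClosure_normal

lemma inv_mul_apply_mem_actionCommutator {K : Subgroup P} {k : P} (hk : k ∈ K) (m : M) :
    m⁻¹ * a k m ∈ actionCommutator a K :=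
  Subgroup.subset_normalClosure ⟨k, hk, m, rfl⟩

lemma mk_apply_eq_mk_of_mem {K : Subgroup P} {k : P} (hk : k ∈ K) (m : M) :
    (a k m : M ⧸ actionCommutator a K) = m := by
  rw [eq_comm, QuotientGroup.eq]
  exact inv_mul_apply_mem_actionCommutator hk m

lemma apply_mem_actionCommutator {K : Subgroup P} [K.Normal] (p : P) {n : M}
    (hn : n ∈ actionCommutator a K) : a p n ∈ actionCommutator a K := by
  have hle : actionCommutator a K ≤ (actionCommutator a K).comap (a p).toMonoidHom := by
    refine Subgroup.normalClosure_le_normal ?_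
    rintro _ ⟨k, hk, m, rfl⟩
    have hconj : a p (m⁻¹ * a k m) = (a p m)⁻¹ * a (p * k * p⁻¹) (a p m) := by
      simp only [map_mul, map_inv, MulAut.mul_apply, MulAut.inv_apply, MulEquiv.symm_apply_apply]
    exact Subgroup.mem_comap.mpr <| hconj ▸
      inv_mul_apply_mem_actionCommutator (a := a) (‹K.Normal›.conj_mem k hk p) (a p m)
  exact hle hn

lemma actionCommutator_le_ker {Q : Type*} [Group Q] (d : M →* P)
    (hpre : ∀ (m : M) (p : P), d (a p m) = p⁻¹ * d m * p) (φ : P →* Q) :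
    actionCommutator a φ.ker ≤ (φ.comp d).ker := by
  refine Subgroup.normalClosure_le_normal ?_
  rintro _ ⟨k, hk, m, rfl⟩
  simp [MonoidHom.mem_ker.mp hk, hpre]

end ActionCommutator

section QuotientAction

variable {M P : Type*} [Group M] [Group P] (a : P →* MulAut M)

lemma Subgroup.map_mulAut_eq_of_forall_mem {N : Subgroup M} (hN : ∀ (p : P), ∀ n ∈ N, a p n ∈ N) (p : P) :
    N.map (a p).toMonoidHom = N :=
  le_antisymm (Subgroup.map_le_iff_le_comap.mpr fun n hn => hN p n hn)
    fun n hn => ⟨a p⁻¹ n, hN _ _ hn, by simp⟩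

noncomputable def quotientAction (N : Subgroup M) [N.Normal]
    (hN : ∀ (p : P), ∀ n ∈ N, a p n ∈ N) : P →* MulAut (M ⧸ N) where
  toFun p := QuotientGroup.congr N N (a p) (Subgroup.map_mulAut_eq_of_forall_mem a hN p)
  map_one' := MulEquiv.ext fun x => QuotientGroup.induction_on x fun m => by
    simp only [map_one, MulAut.one_apply]
    rfl
  map_mul' p q := MulEquiv.ext fun x => QuotientGroup.induction_on x fun m => by
    simp only [map_mul, MulAut.mul_apply]
    rfl

@[simp] lemma quotientAction_mk (N : Subgroup M) [N.Normal]
    (hN : ∀ (p : P), ∀ n ∈ N, a p n ∈ N) (p : P) (m : M) :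
    quotientAction a N hN p m = (a p m : M ⧸ N) :=
  rfl

lemma le_ker_quotientAction (K : Subgroup P) [K.Normal] :
    K ≤ (quotientAction a (actionCommutator a K) fun p _ => apply_mem_actionCommutator p).ker :=
  fun k hk => MulEquiv.ext fun x => QuotientGroup.induction_on x fun m => by
    simpa using mk_apply_eq_mk_of_mem hk m

end QuotientAction

lemma map_peiffer {G G' Q Q' : Type*} [Group G] [Group G'] [Group Q] [Group Q']
    {D : G →* Q} {A : Q →* MulAut G} {D' : G' →* Q'} {A' : Q' →* MulAut G'}
    (f : G →* G') (g : Q →* Q') (hD : ∀ x, D' (f x) = g (D x))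
    (hA : ∀ q x, f (A q x) = A' (g q) (f x)) (x y : G) :
    f (peiffer D A x y) = peiffer D' A' (f x) (f y) := by
  simp [peiffer, hD, hA]

/-- for a pre-crossed module d : M → P and a surjection φ : P → Q with kernel K,
the map ∂* : M/[K,M] → Q, m[K,M] ↦ φ(d m), is a well-defined homomorphism, the Q-action
(m[K,M])^{φ p} = m^p[K,M] is well defined, ∂* is a pre-crossed module for it, and if d is a
nil(2)-module then so is ∂*. -/
theorem induced_along_surjection_precrossed {M P Q : Type*}
    [Group M] [Group P] [Group Q]
    (d : M →* P) (a : P →* MulAut M)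
    (hpre : ∀ (m : M) (p : P), d (a p m) = p⁻¹ * d m * p)
    (φ : P →* Q) (hφ : Function.Surjective φ) :
    let N : Subgroup M :=
      Subgroup.normalClosure {x | ∃ k ∈ φ.ker, ∃ m : M, x = m⁻¹ * a k m}
    ∃ (D : M ⧸ N →* Q) (A : Q →* MulAut (M ⧸ N)),
      (∀ m : M, D (QuotientGroup.mk m) = φ (d m)) ∧
      (∀ (p : P) (m : M), A (φ p) (QuotientGroup.mk m) = QuotientGroup.mk (a p m)) ∧
      (∀ (q : Q) (x : M ⧸ N), D (A q x) = q⁻¹ * D x * q) ∧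
      ((∀ x y z : M,
          peiffer d a (peiffer d a x y) z = 1 ∧ peiffer d a x (peiffer d a y z) = 1) →
        ∀ x y z : M ⧸ N,
          peiffer D A (peiffer D A x y) z = 1 ∧ peiffer D A x (peiffer D A y z) = 1) := by
  intro N
  let D : M ⧸ N →* Q := QuotientGroup.lift N (φ.comp d) (actionCommutator_le_ker d hpre φ)
  let A : Q →* MulAut (M ⧸ N) :=
    φ.liftOfSurjective hφ ⟨_, le_ker_quotientAction a φ.ker⟩
  have hD : ∀ m : M, D m = φ (d m) := fun _ => rfl
  have hA : ∀ (p : P) (m : M), A (φ p) m = (a p m : M ⧸ N) := fun p m => by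
    simp only [A, MonoidHom.liftOfRightInverse_comp_apply]
    exact quotientAction_mk a _ _ p m
  have hpeiffer : ∀ x y : M, peiffer D A (x : M ⧸ N) y = ((peiffer d a x y : M) : M ⧸ N) :=
    fun x y => (map_peiffer (QuotientGroup.mk' N) φ hD (fun p m => (hA p m).symm) x y).symm
  refine ⟨D, A, hD, hA, ?_, ?_⟩
  · intro q x
    obtain ⟨p, rfl⟩ := hφ q
    induction x using QuotientGroup.induction_on with
    | H m => simp [hA, hD, hpre]
  · intro hnil x y z
    induction x using QuotientGroup.induction_on with | H x =>
    induction y using QuotientGroup.induction_on with | H y =>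
    induction z using QuotientGroup.induction_on with | H z =>
    simp only [hpeiffer, (hnil x y z).1, (hnil x y z).2, QuotientGroup.mk_one, and_self]
end
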